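/- Conditional variance underestimates the total variance: E_Z E[D_F[ℰ(X|Z) || X] | Z] = E D_F[ℰX || X] - E_Z D_F[ℰX || ℰ(X|Z)]. -/

import Mathlib

/-!
The three-point identity `D a x - D a c - D c x = ⟪c - a, ∇F x - ∇F c⟫` reduces the claim to
`∫ ⟪C - ℰX, ∇F X - E[∇F X | Z]⟫ = 0`, which is the pull-out property of conditional
expectation as soon as `C` is `σ(Z)`-measurable up to null sets. That holds because `C` is
recovered from `E[∇F X | Z]` by a Borel left inverse of `∇F` on the closed set `S`, which exists
by the Lusin–Souslin theorem.
-/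

open MeasureTheory
open scoped RealInnerProductSpace

noncomputable def bregmanDiv {E : Type*} [NormedAddCommGroup E] [InnerProductSpace ℝ E]
    (F : E → ℝ) (f' : E → E) (y x : E) : ℝ :=
  F y - F x - ⟪f' x, y - x⟫

theorem bregmanDiv_sub_bregmanDiv_sub_bregmanDiv {E : Type*} [NormedAddCommGroup E]
    [InnerProductSpace ℝ E] (F : E → ℝ) (f' : E → E) (a c x : E) :
    bregmanDiv F f' a x - bregmanDiv F f' a c - bregmanDiv F f' c x = ⟪c - a, f' x - f' c⟫ := by
  simp only [bregmanDiv, inner_sub_left, inner_sub_right, real_inner_comm]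
  ring

theorem measurable_gradient {E : Type*} [NormedAddCommGroup E] [InnerProductSpace ℝ E]
    [CompleteSpace E] [MeasurableSpace E] [BorelSpace E] (F : E → ℝ) :
    Measurable (gradient F) :=
  (InnerProductSpace.toDual ℝ E).symm.continuous.measurable.comp (measurable_fderiv ℝ F)

theorem MeasurableSet.exists_measurable_leftInvOn {α β : Type*} [MeasurableSpace α]
    [StandardBorelSpace α] [Nonempty α] [MeasurableSpace β]
    [MeasurableSpace.CountablySeparated β] {S : Set α} (hS : MeasurableSet S) {φ : α → β}
    (hφ : Measurable φ) (hinj : S.InjOn φ) :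
    ∃ r : β → α, Measurable r ∧ S.LeftInvOn r φ := by
  have := hS.standardBorel
  have hemb : MeasurableEmbedding (S.domRestrict φ) :=
    (hφ.comp measurable_subtype_coe).measurableEmbedding hinj.injective
  obtain ⟨r, hrm, hr⟩ := hemb.exists_measurable_extend measurable_subtype_coe fun _ => ‹_›
  exact ⟨r, hrm, fun x hx => congrFun hr ⟨x, hx⟩⟩

theorem aestronglyMeasurable_of_ae_comp_eq_of_injOn {Ω α β : Type*} {m mΩ : MeasurableSpace Ω}
    {μ : Measure Ω} [TopologicalSpace α] [PolishSpace α] [MeasurableSpace α] [BorelSpace α]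
    [MeasurableSpace β] [MeasurableSpace.CountablySeparated β] {S : Set α}
    (hS : MeasurableSet S) {φ : α → β} (hφ : Measurable φ) (hinj : S.InjOn φ)
    {C : Ω → α} {h : Ω → β} (hh : Measurable[m] h)
    (hC : ∀ᵐ ω ∂μ, C ω ∈ S ∧ φ (C ω) = h ω) :
    AEStronglyMeasurable[m] C μ := by
  rcases isEmpty_or_nonempty Ω with _ | ⟨⟨ω⟩⟩
  · exact StronglyMeasurable.of_subsingleton_dom.aestronglyMeasurable
  have : Nonempty α := ⟨C ω⟩
  obtain ⟨r, hrm, hr⟩ := hS.exists_measurable_leftInvOn hφ hinj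
  refine ⟨r ∘ h, (hrm.comp hh).stronglyMeasurable, ?_⟩
  filter_upwards [hC] with ω ⟨hCS, hφC⟩
  simp only [Function.comp_apply, ← hφC, hr hCS]

theorem integral_inner_sub_condExp_eq_zero {Ω E : Type*} {m mΩ : MeasurableSpace Ω}
    {μ : Measure Ω} [NormedAddCommGroup E] [InnerProductSpace ℝ E] [CompleteSpace E]
    (hm : m ≤ mΩ) [SigmaFinite (μ.trim hm)] {V Y : Ω → E} (hV : AEStronglyMeasurable[m] V μ)
    (hY : Integrable Y μ) (hVY : Integrable (fun ω => ⟪V ω, Y ω - μ[Y | m] ω⟫) μ) :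
    ∫ ω, ⟪V ω, Y ω - μ[Y | m] ω⟫ ∂μ = 0 := by
  have hres : μ[Y - μ[Y | m] | m] =ᵐ[μ] 0 := by
    refine (condExp_sub hY integrable_condExp m).trans ?_
    rw [condExp_of_stronglyMeasurable hm stronglyMeasurable_condExp integrable_condExp, sub_self]
  have hpull := condExp_bilin_of_aestronglyMeasurable_left (innerSL ℝ) hV
    (g := Y - μ[Y | m]) hVY (hY.sub integrable_condExp)
  calc ∫ ω, ⟪V ω, Y ω - μ[Y | m] ω⟫ ∂μ
      = ∫ ω, μ[fun ω => innerSL ℝ (V ω) ((Y - μ[Y | m]) ω) | m] ω ∂μ :=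
        (integral_condExp hm).symm
    _ = 0 := by
      refine (integral_congr_ae (hpull.trans ?_)).trans (integral_zero Ω ℝ)
      filter_upwards [hres] with ω hω
      simp [hω]

theorem conditional_variance_underestimates_general {d : ℕ}
    (S : Set (EuclideanSpace ℝ (Fin d))) (hSc : IsClosed S)
    (F : EuclideanSpace ℝ (Fin d) → ℝ)
    (f' g : EuclideanSpace ℝ (Fin d) → EuclideanSpace ℝ (Fin d))
    (hdiff : ∀ x ∈ S, HasGradientAt F (f' x) x)
    (hg : ∀ x ∈ S, g (f' x) = x)
    (D : EuclideanSpace ℝ (Fin d) → EuclideanSpace ℝ (Fin d) → ℝ)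
    (hD : ∀ y x, D y x = F y - F x - ((inner ℝ (f' x) (y - x) : ℝ)))
    {Ω β : Type*} [MeasurableSpace Ω] [MeasurableSpace β]
    (μ : Measure Ω) [IsProbabilityMeasure μ]
    (X : Ω → EuclideanSpace ℝ (Fin d)) (Z : Ω → β)
    (hZm : Measurable Z)
    (hdint : Integrable (fun ω => f' (X ω)) μ)
    (EX : EuclideanSpace ℝ (Fin d))
    (C : Ω → EuclideanSpace ℝ (Fin d))
    (hCrange : ∀ᵐ ω ∂μ,
      f' (C ω) = (μ[(fun ω' => f' (X ω')) | MeasurableSpace.comap Z inferInstance]) ω)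
    (hCS : ∀ᵐ ω ∂μ, C ω ∈ S)
    (hintV : Integrable (fun ω => D EX (X ω)) μ)
    (hintCV : Integrable (fun ω => D (C ω) (X ω)) μ)
    (hintEXC : Integrable (fun ω => D EX (C ω)) μ) :
    ∫ ω, (μ[(fun ω' => D (C ω') (X ω')) | MeasurableSpace.comap Z inferInstance]) ω ∂μ
      = (∫ ω, D EX (X ω) ∂μ) - ∫ ω, D EX (C ω) ∂μ := by
  set m := MeasurableSpace.comap Z inferInstance
  have hm : m ≤ _ := hZm.comap_le
  obtain rfl : D = bregmanDiv F f' := funext fun y => funext (hD y)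
  have hCm : AEStronglyMeasurable[m] C μ := by
    refine aestronglyMeasurable_of_ae_comp_eq_of_injOn hSc.measurableSet (measurable_gradient F)
      ((Set.LeftInvOn.injOn hg).congr fun x hx => (hdiff x hx).gradient.symm)
      (h := μ[fun ω => f' (X ω) | m]) stronglyMeasurable_condExp.measurable ?_
    filter_upwards [hCS, hCrange] with ω hωS hω
    exact ⟨hωS, (hdiff _ hωS).gradient.trans hω⟩
  have hthree : (fun ω => bregmanDiv F f' EX (X ω) - bregmanDiv F f' EX (C ω)
        - bregmanDiv F f' (C ω) (X ω)) =ᵐ[μ]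
      fun ω => ⟪C ω - EX, f' (X ω) - μ[fun ω' => f' (X ω') | m] ω⟫ := by
    filter_upwards [hCrange] with ω hω
    rw [bregmanDiv_sub_bregmanDiv_sub_bregmanDiv, hω]
  have horth : ∫ ω, (bregmanDiv F f' EX (X ω) - bregmanDiv F f' EX (C ω)
      - bregmanDiv F f' (C ω) (X ω)) ∂μ = 0 := by
    rw [integral_congr_ae hthree]
    exact integral_inner_sub_condExp_eq_zero hm (hCm.sub aestronglyMeasurable_const) hdint
      (((hintV.sub hintEXC).sub hintCV).congr hthree)
  rw [integral_sub (f := fun ω => _ - _) (hintV.sub hintEXC) hintCV,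
    integral_sub hintV hintEXC] at horth
  rw [integral_condExp hm]
  linarith

/-- Conditional variance underestimates the total variance:
`E_Z E[D_F[ℰ(X|Z) ‖ X] | Z] = E D_F[ℰX ‖ X] - E_Z D_F[ℰX ‖ ℰ(X|Z)]`. -/
theorem conditional_variance_underestimates {d : ℕ}
    (S : Set (EuclideanSpace ℝ (Fin d))) (hSc : IsClosed S) (hSv : Convex ℝ S)
    (F : EuclideanSpace ℝ (Fin d) → ℝ)
    (f' g : EuclideanSpace ℝ (Fin d) → EuclideanSpace ℝ (Fin d))
    (hF : StrictConvexOn ℝ S F)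
    (hdiff : ∀ x ∈ S, HasGradientAt F (f' x) x)
    (hg : ∀ x ∈ S, g (f' x) = x)
    (D : EuclideanSpace ℝ (Fin d) → EuclideanSpace ℝ (Fin d) → ℝ)
    (hD : ∀ y x, D y x = F y - F x - ((inner ℝ (f' x) (y - x) : ℝ)))
    {Ω β : Type*} [MeasurableSpace Ω] [MeasurableSpace β]
    (μ : Measure Ω) [IsProbabilityMeasure μ]
    (X : Ω → EuclideanSpace ℝ (Fin d)) (Z : Ω → β)
    (hXm : AEMeasurable X μ) (hZm : Measurable Z)
    (hXS : ∀ᵐ ω ∂μ, X ω ∈ S)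
    (hdint : Integrable (fun ω => f' (X ω)) μ)
    (EX : EuclideanSpace ℝ (Fin d)) (hEX : EX = g (∫ ω, f' (X ω) ∂μ))
    (hrange : f' EX = ∫ ω, f' (X ω) ∂μ) (hmem : EX ∈ S)
    (C : Ω → EuclideanSpace ℝ (Fin d))
    (hC : ∀ ω, C ω = g ((μ[(fun ω' => f' (X ω')) | MeasurableSpace.comap Z inferInstance]) ω))
    (hCrange : ∀ᵐ ω ∂μ,
      f' (C ω) = (μ[(fun ω' => f' (X ω')) | MeasurableSpace.comap Z inferInstance]) ω)
    (hCS : ∀ᵐ ω ∂μ, C ω ∈ S)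
    (hCint : Integrable (fun ω => f' (C ω)) μ)
    (hintV : Integrable (fun ω => D EX (X ω)) μ)
    (hintCV : Integrable (fun ω => D (C ω) (X ω)) μ)
    (hintEXC : Integrable (fun ω => D EX (C ω)) μ) :
    ∫ ω, (μ[(fun ω' => D (C ω') (X ω')) | MeasurableSpace.comap Z inferInstance]) ω ∂μ
      = (∫ ω, D EX (X ω) ∂μ) - ∫ ω, D EX (C ω) ∂μ :=
  conditional_variance_underestimates_general S hSc F f' g hdiff hg D hD μ X Z hZm hdint EX C
    hCrange hCS hintV hintCV hintEXC
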